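/- For the snake-triangulation cluster in Gr(3,n) of quadrilateral type (whose non-interval 3-subsets are exactly {i,i+1,n−i} for 1 ≤ i < n/2−1, {i,i+1,n−i+1} for 2 ≤ i < n/2−1, {i,n−i,n−i+1} for 2 ≤ i < n/2−1, and {i,n−i+1,n−i+2} for 2 ≤ i < n/2, together with all n interval 3-subsets), any two members of this collection are pairwise weakly separated. -/

import Mathlib

/-- Elements are in cyclic order (mod n) if some rotation of the list is strictly increasing. -/
def CyclicallyOrdered (l : List ℕ) : Prop := ∃ k, (l.rotate k).Chain' (· < ·)

/-- Two subsets `I, J` of `{1,...,n}` are weakly separated (non-crossing) if there do not exist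
`s < t < u < v` in cyclic order with `s, u ∈ I \ J` and `t, v ∈ J \ I`. -/
def WeaklySeparated (I J : Finset ℕ) : Prop :=
  ¬ ∃ s t u v : ℕ, CyclicallyOrdered [s, t, u, v] ∧
    s ∈ I ∧ s ∉ J ∧ u ∈ I ∧ u ∉ J ∧ t ∈ J ∧ t ∉ I ∧ v ∈ J ∧ v ∉ I

/-- The snake-triangulation (quadrilateral type) collection of 3-subsets of `{1,...,n}`:
all `n` cyclic interval 3-subsets together with the non-interval subsets
`{i,i+1,n-i}` for `1 ≤ i < n/2 - 1`, `{i,i+1,n-i+1}` and `{i,n-i,n-i+1}` for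
`2 ≤ i < n/2 - 1`, and `{i,n-i+1,n-i+2}` for `2 ≤ i < n/2`. -/
def QuadCluster (n : ℕ) : Finset (Finset ℕ) :=
  ((Finset.range n).image (fun i => (Finset.range 3).image (fun t => (i + t) % n + 1))) ∪
  (((Finset.Icc 1 n).filter (fun i => 2 * i + 2 < n)).image
      (fun i => ({i, i + 1, n - i} : Finset ℕ))) ∪
  (((Finset.Icc 2 n).filter (fun i => 2 * i + 2 < n)).image
      (fun i => ({i, i + 1, n - i + 1} : Finset ℕ))) ∪
  (((Finset.Icc 2 n).filter (fun i => 2 * i + 2 < n)).image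
      (fun i => ({i, n - i, n - i + 1} : Finset ℕ))) ∪
  (((Finset.Icc 2 n).filter (fun i => 2 * i < n)).image
      (fun i => ({i, n - i + 1, n - i + 2} : Finset ℕ)))

/-!
If `I \ J` lies in an arc of the circle whose complementary arc contains `J \ I`, there is no
crossing quadruple. A cyclic interval and its complement in `{1, …, n}` are both arcs, so an
interval is weakly separated from every subset of `{1, …, n}`. Each non-interval member of the
cluster consists of elements near `i` and elements near `n - i`, with `2 i < n`; for two of
them, every alternating pattern is excluded by comparing these positions, a finite case
analysis in linear arithmetic.
-/

theorem CyclicallyOrdered.of_isRotated {l l' : List ℕ} (hl : CyclicallyOrdered l) (h : l ~r l') :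
    CyclicallyOrdered l' := by
  obtain ⟨k, hk⟩ := hl
  obtain ⟨j, hj⟩ := h.symm.trans ⟨k, rfl⟩
  exact ⟨j, hj ▸ hk⟩

theorem CyclicallyOrdered.four {s t u v : ℕ} (h : CyclicallyOrdered [s, t, u, v]) :
    (s < t ∧ t < u ∧ u < v) ∨ (t < u ∧ u < v ∧ v < s) ∨
      (u < v ∧ v < s ∧ s < t) ∨ (v < s ∧ s < t ∧ t < u) := by
  obtain ⟨k, hk⟩ := h
  rw [List.Chain', ← List.rotate_mod] at hk
  have : k % 4 < 4 := Nat.mod_lt _ (by norm_num)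
  interval_cases k % 4 <;> simp [List.rotate] at hk <;> omega

theorem WeaklySeparated.symm {I J : Finset ℕ} (h : WeaklySeparated I J) : WeaklySeparated J I :=
  fun ⟨s, t, u, v, hc, hs, hs', hu, hu', ht, ht', hv, hv'⟩ =>
    h ⟨t, u, v, s, hc.of_isRotated ⟨1, rfl⟩, ht, ht', hv, hv', hu, hu', hs, hs'⟩

theorem weaklySeparated_of_sdiff_Ico {I J : Finset ℕ} {a b : ℕ}
    (hI : ∀ x ∈ I, x ∉ J → a ≤ x ∧ x < b) (hJ : ∀ x ∈ J, x ∉ I → x < a ∨ b ≤ x) :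
    WeaklySeparated I J := by
  rintro ⟨s, t, u, v, hc, hs, hs', hu, hu', ht, ht', hv, hv'⟩
  have := hI s hs hs'; have := hI u hu hu'; have := hJ t ht ht'; have := hJ v hv hv'
  have := hc.four
  omega

def cyclicInterval (n i : ℕ) : Finset ℕ := (Finset.range 3).image (fun t => (i + t) % n + 1)

theorem mem_cyclicInterval_iff {n i x : ℕ} (hi : i < n) :
    x ∈ cyclicInterval n i ↔ 1 ≤ x ∧ x ≤ n ∧ ((i < x ∧ x ≤ i + 3) ∨ x + n ≤ i + 3) := by
  simp only [cyclicInterval, Finset.mem_image, Finset.mem_range]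
  constructor
  · rintro ⟨t, ht, rfl⟩
    rcases lt_or_ge (i + t) n with h | h
    · rw [Nat.mod_eq_of_lt h]; omega
    · rw [Nat.mod_eq_sub_mod h]
      have := Nat.mod_le (i + t - n) n
      have := Nat.mod_lt (i + t - n) (by omega : 0 < n)
      omega
  · rintro ⟨hx1, hxn, h | h⟩
    · exact ⟨x - 1 - i, by omega, by rw [Nat.mod_eq_of_lt (by omega)]; omega⟩
    · refine ⟨x - 1 + n - i, by omega, ?_⟩
      rw [show i + (x - 1 + n - i) = x - 1 + n by omega, Nat.add_mod_right,
        Nat.mod_eq_of_lt (by omega)]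
      omega

theorem cyclicInterval_subset_Icc {n i : ℕ} (hi : i < n) :
    cyclicInterval n i ⊆ Finset.Icc 1 n := fun x hx => by
  have := (mem_cyclicInterval_iff hi).1 hx
  simp only [Finset.mem_Icc]; omega

theorem weaklySeparated_cyclicInterval {n i : ℕ} {J : Finset ℕ} (hi : i < n)
    (hJ : J ⊆ Finset.Icc 1 n) : WeaklySeparated (cyclicInterval n i) J := by
  have bound (x) (hx : x ∈ J) := Finset.mem_Icc.1 (hJ hx)
  rcases le_or_gt (i + 3) n with h | h
  · refine weaklySeparated_of_sdiff_Ico (a := i + 1) (b := i + 4) (fun x hx _ => ?_)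
      (fun x hx hxI => ?_)
    · have := (mem_cyclicInterval_iff hi).1 hx; omega
    · have := (mem_cyclicInterval_iff hi).not.1 hxI; have := bound x hx; omega
  · refine (weaklySeparated_of_sdiff_Ico (a := i + 4 - n) (b := i + 1) (fun x hx hxI => ?_)
      (fun x hx _ => ?_)).symm
    · have := (mem_cyclicInterval_iff hi).not.1 hxI; have := bound x hx; omega
    · have := (mem_cyclicInterval_iff hi).1 hx; omega

def IsQuadSnakeSet (n : ℕ) (I : Finset ℕ) : Prop :=
  ∃ i, (1 ≤ i ∧ 2 * i + 2 < n ∧ I = {i, i + 1, n - i}) ∨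
    (2 ≤ i ∧ 2 * i + 2 < n ∧ I = {i, i + 1, n - i + 1}) ∨
    (2 ≤ i ∧ 2 * i + 2 < n ∧ I = {i, n - i, n - i + 1}) ∨
    (2 ≤ i ∧ 2 * i < n ∧ I = {i, n - i + 1, n - i + 2})

theorem IsQuadSnakeSet.subset_Icc {n : ℕ} {I : Finset ℕ} (hI : IsQuadSnakeSet n I) :
    I ⊆ Finset.Icc 1 n := by
  obtain ⟨i, ⟨hi1, hi, rfl⟩ | ⟨hi1, hi, rfl⟩ | ⟨hi1, hi, rfl⟩ | ⟨hi1, hi, rfl⟩⟩ := hI <;>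
    intro x hx <;>
    simp only [Finset.mem_insert, Finset.mem_singleton, Finset.mem_Icc] at hx ⊢ <;>
    omega

set_option maxHeartbeats 4000000 in
theorem IsQuadSnakeSet.weaklySeparated {n : ℕ} {I J : Finset ℕ} (hI : IsQuadSnakeSet n I)
    (hJ : IsQuadSnakeSet n J) : WeaklySeparated I J := by
  rintro ⟨s, t, u, v, hc, hs, hs', hu, hu', ht, ht', hv, hv'⟩
  have := hc.four
  obtain ⟨i, ⟨-, hi, rfl⟩ | ⟨-, hi, rfl⟩ | ⟨-, hi, rfl⟩ | ⟨-, hi, rfl⟩⟩ := hI <;>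
  obtain ⟨j, ⟨-, hj, rfl⟩ | ⟨-, hj, rfl⟩ | ⟨-, hj, rfl⟩ | ⟨-, hj, rfl⟩⟩ := hJ <;>
  simp only [Finset.mem_insert, Finset.mem_singleton, not_or] at hs hs' hu hu' ht ht' hv hv' <;>
  rcases hs with rfl | rfl | rfl <;> rcases hu with rfl | rfl | rfl <;>
    rcases ht with rfl | rfl | rfl <;> rcases hv with rfl | rfl | rfl <;> omega

theorem mem_quadCluster {n : ℕ} {I : Finset ℕ} :
    I ∈ QuadCluster n ↔ (∃ i < n, I = cyclicInterval n i) ∨ IsQuadSnakeSet n I := by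
  simp only [QuadCluster, IsQuadSnakeSet, cyclicInterval, Finset.mem_union, Finset.mem_image,
    Finset.mem_filter, Finset.mem_Icc, Finset.mem_range]
  constructor
  · rintro ((((⟨i, hi, rfl⟩ | ⟨i, hi, rfl⟩) | ⟨i, hi, rfl⟩) | ⟨i, hi, rfl⟩) | ⟨i, hi, rfl⟩)
    · exact .inl ⟨i, hi, rfl⟩
    · exact .inr ⟨i, .inl ⟨hi.1.1, hi.2, rfl⟩⟩
    · exact .inr ⟨i, .inr (.inl ⟨hi.1.1, hi.2, rfl⟩)⟩
    · exact .inr ⟨i, .inr (.inr (.inl ⟨hi.1.1, hi.2, rfl⟩))⟩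
    · exact .inr ⟨i, .inr (.inr (.inr ⟨hi.1.1, hi.2, rfl⟩))⟩
  · rintro (⟨i, hi, rfl⟩ | ⟨i, ⟨h1, h2, rfl⟩ | ⟨h1, h2, rfl⟩ | ⟨h1, h2, rfl⟩ | ⟨h1, h2, rfl⟩⟩)
    · exact .inl (.inl (.inl (.inl ⟨i, hi, rfl⟩)))
    · exact .inl (.inl (.inl (.inr ⟨i, ⟨⟨h1, by omega⟩, h2⟩, rfl⟩)))
    · exact .inl (.inl (.inr ⟨i, ⟨⟨h1, by omega⟩, h2⟩, rfl⟩))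
    · exact .inl (.inr ⟨i, ⟨⟨h1, by omega⟩, h2⟩, rfl⟩)
    · exact .inr ⟨i, ⟨⟨h1, by omega⟩, h2⟩, rfl⟩

theorem quad_cluster_weakly_separated_general (n : ℕ) :
    ∀ I ∈ QuadCluster n, ∀ J ∈ QuadCluster n, WeaklySeparated I J := by
  intro I hI J hJ
  rcases mem_quadCluster.1 hJ with ⟨j, hj, rfl⟩ | hJ
  · rcases mem_quadCluster.1 hI with ⟨i, hi, rfl⟩ | hI
    · exact weaklySeparated_cyclicInterval hi (cyclicInterval_subset_Icc hj)
    · exact (weaklySeparated_cyclicInterval hj hI.subset_Icc).symm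
  · rcases mem_quadCluster.1 hI with ⟨i, hi, rfl⟩ | hI
    · exact weaklySeparated_cyclicInterval hi hJ.subset_Icc
    · exact hI.weaklySeparated hJ

theorem quad_cluster_weakly_separated (n : ℕ) (hn : 5 ≤ n) :
    ∀ I ∈ QuadCluster n, ∀ J ∈ QuadCluster n, WeaklySeparated I J :=
  quad_cluster_weakly_separated_general n
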